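/- arXiv:2209.12648 — 5 statements merged into one kernel-verified Lean document; each statement's English description precedes it below -/
import Mathlib

section
/- Suppose (x(t), θ(t)) solves the closed-loop unicycle dynamics under the forward motion control, and at some time t the alignment e(t) := (cos θ(t), sin θ(t))·(g − x(t)) equals 0 with x(t) ≠ g. Then d/dt e(t) = ω·(−sin θ, cos θ)·(g − x) − v ≥ (k_ω π/2)·‖g − x(t)‖ > 0, where the angular control at such a state equals ω = sgn((−sin θ, cos θ)·(g − x))·k_ω·(π/2) and v = 0. Consequently, if e(0) ≥ 0 then e(t) ≥ 0 for all t ≥ 0 (persistent goal alignment). -/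
open Real Metric Set
open scoped RealInnerProductSpace

noncomputable section

abbrev E2 := EuclideanSpace ℝ (Fin 2)

/-- Unit forward direction vector of orientation `θ`. -/
def uvec (θ : ℝ) : E2 := WithLp.toLp 2 ![Real.cos θ, Real.sin θ]

/-- Unit normal (perpendicular) vector of orientation `θ`. -/
def nvec (θ : ℝ) : E2 := WithLp.toLp 2 ![-Real.sin θ, Real.cos θ]

/-- Two-argument arctangent, `atan2 y x`. -/
def atan2 (y x : ℝ) : ℝ := Complex.arg (x + y * Complex.I)

/-!
At a state with zero alignment `e = ⟪uvec θ, g - x⟫` the robot does not move (`v = 0`) and its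
heading is perpendicular to `g - x`, so `|⟪nvec θ, g - x⟫| = ‖g - x‖` and `atan2` returns `±π/2`
with the sign of `⟪nvec θ, g - x⟫`; since `ė = ω ⟪nvec θ, g - x⟫ - v`, this gives
`ė = k_ω (π/2) ‖g - x‖`. Hence `e` cannot leave `[0, ∞)`: if it became negative, then at the
last zero `t₀` before that either `x t₀ ≠ g`, and `e` is increasing at `t₀`, or `x t₀ = g`, and
the robot stays at the goal while `e ≤ 0`, which forces `e = 0` afterwards.
-/

open Filter Topology

theorem HasDerivWithinAt.eventually_lt_nhdsGT {f : ℝ → ℝ} {f' t : ℝ}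
    (hf : HasDerivWithinAt f f' (Ioi t) t) (hpos : 0 < f') : ∀ᶠ s in 𝓝[>] t, f t < f s := by
  have hslope := (hasDerivWithinAt_iff_tendsto_slope' (lt_irrefl t)).mp hf
  filter_upwards [hslope.eventually (eventually_gt_nhds hpos), self_mem_nhdsWithin] with s hs hts
  rw [slope_def_field] at hs
  exact sub_pos.mp ((div_pos_iff_of_pos_right (sub_pos.mpr hts)).mp hs)

theorem nonneg_of_forall_eq_zero_exists_nonneg_right {f : ℝ → ℝ} {a b : ℝ}
    (hf : ContinuousOn f (Icc a b)) (ha : 0 ≤ f a)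
    (h : ∀ t ∈ Ico a b, f t = 0 → ∀ y ∈ Ioi t, ∃ s ∈ Ioc t y, 0 ≤ f s) :
    ∀ t ∈ Icc a b, 0 ≤ f t := by
  have hclosed : IsClosed ({t | 0 ≤ f t} ∩ Icc a b) := by
    rw [inter_comm]
    exact hf.preimage_isClosed_of_isClosed isClosed_Icc isClosed_Ici
  refine hclosed.Icc_subset_of_forall_exists_gt ha fun t ⟨ht₀, ht⟩ y hy => ?_
  rcases eq_or_lt_of_le (show 0 ≤ f t from ht₀) with hzero | hpos
  · obtain ⟨s, hs, hfs⟩ := h t ht hzero.symm y hy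
    exact ⟨s, hfs, hs⟩
  · have hcont : ContinuousWithinAt f (Ioi t) t :=
      (hf.continuousWithinAt (Ico_subset_Icc_self ht)).mono_of_mem_nhdsWithin
        (Icc_mem_nhdsGT_of_mem ht)
    obtain ⟨s, hfs, hs⟩ :=
      ((hcont.eventually (eventually_gt_nhds hpos)).and (Ioc_mem_nhdsGT hy)).exists
    exact ⟨s, hfs.le, hs⟩

theorem eq_of_hasDerivAt_smul_of_eq_zero {E : Type*} [NormedAddCommGroup E] [NormedSpace ℝ E]
    {x u : ℝ → E} {v : ℝ → ℝ} {a b : ℝ} (hx : ∀ s, HasDerivAt x (v s • u s) s)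
    (hv : ∀ s ∈ Ico a b, v s = 0) (hab : a ≤ b) : x b = x a := by
  refine constant_of_has_deriv_right_zero
    (continuous_iff_continuousAt.2 fun s => (hx s).continuousAt).continuousOn
    (fun s hs => ?_) b ⟨hab, le_rfl⟩
  simpa [hv s hs] using (hx s).hasDerivWithinAt

lemma inner_uvec (θ : ℝ) (w : E2) : ⟪uvec θ, w⟫ = cos θ * w 0 + sin θ * w 1 := by
  simp [uvec, PiLp.inner_apply, Fin.sum_univ_two, mul_comm]

lemma inner_nvec (θ : ℝ) (w : E2) : ⟪nvec θ, w⟫ = -sin θ * w 0 + cos θ * w 1 := by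
  simp [nvec, PiLp.inner_apply, Fin.sum_univ_two, mul_comm]

lemma norm_uvec (θ : ℝ) : ‖uvec θ‖ = 1 := by
  simp [EuclideanSpace.norm_eq, uvec, Fin.sum_univ_two]

lemma inner_uvec_sq_add_inner_nvec_sq (θ : ℝ) (w : E2) :
    ⟪uvec θ, w⟫ ^ 2 + ⟪nvec θ, w⟫ ^ 2 = ‖w‖ ^ 2 := by
  rw [EuclideanSpace.norm_sq_eq, Fin.sum_univ_two, inner_uvec, inner_nvec, Real.norm_eq_abs,
    Real.norm_eq_abs, sq_abs, sq_abs]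
  linear_combination (w 0 ^ 2 + w 1 ^ 2) * sin_sq_add_cos_sq θ

lemma abs_inner_nvec_of_inner_uvec_eq_zero {θ : ℝ} {w : E2} (h : ⟪uvec θ, w⟫ = 0) :
    |⟪nvec θ, w⟫| = ‖w‖ := by
  rw [← abs_norm, ← sq_eq_sq_iff_abs_eq_abs, ← inner_uvec_sq_add_inner_nvec_sq θ w, h]
  ring

lemma uvec_eq_cos_smul_add_sin_smul (θ : ℝ) :
    uvec θ = cos θ • EuclideanSpace.single 0 1 + sin θ • EuclideanSpace.single 1 1 := by
  ext i
  fin_cases i <;> simp [uvec]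

lemma nvec_eq_neg_sin_smul_add_cos_smul (θ : ℝ) :
    nvec θ = -sin θ • EuclideanSpace.single 0 1 + cos θ • EuclideanSpace.single 1 1 := by
  ext i
  fin_cases i <;> simp [nvec]

lemma hasDerivAt_uvec (θ : ℝ) : HasDerivAt uvec (nvec θ) θ := by
  simp_rw [funext uvec_eq_cos_smul_add_sin_smul, nvec_eq_neg_sin_smul_add_cos_smul]
  exact ((hasDerivAt_cos θ).smul_const _).add ((hasDerivAt_sin θ).smul_const _)

lemma atan2_zero_mul_self (y : ℝ) : atan2 y 0 * y = π / 2 * |y| := by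
  rcases lt_trichotomy y 0 with hy | rfl | hy
  · have : ((0 : ℝ) : ℂ) + y * Complex.I = ((-y : ℝ) : ℂ) * -Complex.I := by push_cast; ring
    rw [atan2, this, Complex.arg_real_mul _ (neg_pos.mpr hy), Complex.arg_neg_I, abs_of_neg hy]
    ring
  · simp
  · rw [atan2, Complex.ofReal_zero, zero_add, Complex.arg_real_mul _ hy, Complex.arg_I,
      abs_of_pos hy]

lemma hasDerivAt_inner_uvec_sub {g x' : E2} {x : ℝ → E2} {θ : ℝ → ℝ} {ω s : ℝ}
    (hx : HasDerivAt x x' s) (hθ : HasDerivAt θ ω s) :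
    HasDerivAt (fun s => ⟪uvec (θ s), g - x s⟫)
      (ω * ⟪nvec (θ s), g - x s⟫ - ⟪uvec (θ s), x'⟫) s := by
  have := ((hasDerivAt_uvec (θ s)).scomp s hθ).inner ℝ (hx.const_sub g)
  refine this.congr_deriv ?_
  rw [Function.comp_apply, inner_neg_right, real_inner_smul_left]
  ring

lemma turn_rate_mul_inner_nvec_sub_speed_of_inner_uvec_eq_zero {kv kω θ : ℝ} {w : E2}
    (h : ⟪uvec θ, w⟫ = 0) :
    kω * atan2 ⟪nvec θ, w⟫ ⟪uvec θ, w⟫ * ⟪nvec θ, w⟫ - kv * max 0 ⟪uvec θ, w⟫ =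
      kω * (π / 2) * ‖w‖ := by
  rw [h, max_self, mul_zero, sub_zero, mul_assoc, atan2_zero_mul_self,
    abs_inner_nvec_of_inner_uvec_eq_zero h, mul_assoc]

theorem stmt_1_general (g : E2) (kv kω : ℝ) (hkω : 0 < kω)
    (x : ℝ → E2) (θ : ℝ → ℝ)
    (e : ℝ → ℝ) (he : e = fun s => ⟪uvec (θ s), g - x s⟫)
    (v : ℝ → ℝ) (hv : v = fun s => kv * max 0 (e s))
    (ω : ℝ → ℝ) (hω : ω = fun s => kω * atan2 ⟪nvec (θ s), g - x s⟫ (e s))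
    (hx : ∀ s, HasDerivAt x (v s • uvec (θ s)) s)
    (hθ : ∀ s, HasDerivAt θ (ω s) s) :
    (∀ t, e t = 0 → x t ≠ g →
      HasDerivAt e (ω t * ⟪nvec (θ t), g - x t⟫ - v t) t ∧
      kω * (π / 2) * ‖g - x t‖ ≤ ω t * ⟪nvec (θ t), g - x t⟫ - v t ∧
      0 < ω t * ⟪nvec (θ t), g - x t⟫ - v t) ∧
    (0 ≤ e 0 → ∀ t, 0 ≤ t → 0 ≤ e t) := by
  have hderiv : ∀ s, HasDerivAt e (ω s * ⟪nvec (θ s), g - x s⟫ - v s) s := fun s => by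
    subst he
    simpa [inner_smul_right, norm_uvec] using hasDerivAt_inner_uvec_sub (g := g) (hx s) (hθ s)
  have hrate : ∀ t, e t = 0 →
      ω t * ⟪nvec (θ t), g - x t⟫ - v t = kω * (π / 2) * ‖g - x t‖ := fun t het => by
    subst hv hω he
    exact turn_rate_mul_inner_nvec_sub_speed_of_inner_uvec_eq_zero het
  have hrate_pos : ∀ t, e t = 0 → x t ≠ g → 0 < ω t * ⟪nvec (θ t), g - x t⟫ - v t :=
    fun t het hxg => by
      have : 0 < ‖g - x t‖ := norm_pos_iff.mpr (sub_ne_zero.mpr hxg.symm)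
      rw [hrate t het]
      positivity
  refine ⟨fun t het hxg => ⟨hderiv t, (hrate t het).ge, hrate_pos t het hxg⟩, fun h0 t ht => ?_⟩
  have hcont : Continuous e := continuous_iff_continuousAt.2 fun s => (hderiv s).continuousAt
  refine nonneg_of_forall_eq_zero_exists_nonneg_right hcont.continuousOn h0
    (fun t₀ _ het₀ y hy => ?_) t ⟨ht, le_rfl⟩
  by_contra! hneg
  by_cases hgoal : x t₀ = g
  · have hstop : x y = x t₀ := eq_of_hasDerivAt_smul_of_eq_zero hx (fun s hs => by
      have hes : e s ≤ 0 := hs.1.eq_or_lt.elim (fun h => h ▸ het₀.le)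
        fun hlt => (hneg s ⟨hlt, hs.2.le⟩).le
      simp [hv, max_eq_left hes]) hy.le
    exact (hneg y ⟨hy, le_rfl⟩).ne (by simp [he, hstop, hgoal])
  · obtain ⟨s, hs, hys⟩ := (((hderiv t₀).hasDerivWithinAt.eventually_lt_nhdsGT
      (hrate_pos t₀ het₀ hgoal)).and (Ioc_mem_nhdsGT hy)).exists
    linarith [hneg s hys]

/-- Persistent goal alignment under the unicycle forward motion control
(Lemma: Persistent Goal Alignment). -/
theorem stmt_1 (g : E2) (kv kω : ℝ) (hkv : 0 < kv) (hkω : 0 < kω)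
    (x : ℝ → E2) (θ : ℝ → ℝ)
    (e : ℝ → ℝ) (he : e = fun s => ⟪uvec (θ s), g - x s⟫)
    (v : ℝ → ℝ) (hv : v = fun s => kv * max 0 (e s))
    (ω : ℝ → ℝ) (hω : ω = fun s => kω * atan2 ⟪nvec (θ s), g - x s⟫ (e s))
    (hx : ∀ s, HasDerivAt x (v s • uvec (θ s)) s)
    (hθ : ∀ s, HasDerivAt θ (ω s) s) :
    (∀ t, e t = 0 → x t ≠ g →
      HasDerivAt e (ω t * ⟪nvec (θ t), g - x t⟫ - v t) t ∧
      kω * (π / 2) * ‖g - x t‖ ≤ ω t * ⟪nvec (θ t), g - x t⟫ - v t ∧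
      0 < ω t * ⟪nvec (θ t), g - x t⟫ - v t) ∧
    (0 ≤ e 0 → ∀ t, 0 ≤ t → 0 ≤ e t) :=
  stmt_1_general g kv kω hkω x θ e he v hv ω hω hx hθ
end
end

section
/- If a′ ∈ IC(a, b, r) and 0 ≤ r′ ≤ r, then IC(a′, b, r′) ⊆ IC(a, b, r), where IC(a, b, r) := conv({a} ∪ B(b, r)). (This is the geometric core of the positive inclusion property of the ice-cream-cone motion prediction.) -/
open Real Metric Set
open scoped RealInnerProductSpace

noncomputable section

/-- The (unbounded) cone with apex `a`, base point `b`, and base radius `r`. -/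
def cone (a b : E2) (r : ℝ) : Set E2 :=
  {p | ∃ α : ℝ, 0 ≤ α ∧ ∃ z ∈ closedBall b r, p = a + α • (z - a)}

/-- The half-plane bounded at `a` pointing towards `b`. -/
def hplane (a b : E2) : Set E2 := {z | 0 ≤ ⟪b - a, z - a⟫}

/-- The bounded ice-cream cone with apex `a`, base point `b`, and radius `r`. -/
def icone (a b : E2) (r : ℝ) : Set E2 := convexHull ℝ ({a} ∪ closedBall b r)

/-- Geometric core of the positive inclusion property of the ice-cream-cone
motion prediction. -/
theorem stmt_9 (a a' b : E2) (r r' : ℝ) (hr' : 0 ≤ r')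
    (ha' : a' ∈ icone a b r) (hrr' : r' ≤ r) :
    icone a' b r' ⊆ icone a b r := by
  apply convexHull_min
  · rintro x (rfl | hx)
    · exact ha'
    · exact subset_convexHull ℝ _ (Or.inr (closedBall_subset_closedBall hrr' hx))
  · exact convex_convexHull ℝ _
end
end

section
/- Define for a pose (x,θ) and goal g with c := (cos θ, sin θ)·(g − x) ≥ 0 and d := |(−sin θ, cos θ)·(g − x)| the four motion prediction sets: M_B = B(g, ‖g − x‖); M_BC = B(g, ‖g − x‖) ∩ Cone(x, g, d); M_IC = IC(x, g, d); and the truncated set M_TC = conv{x, g, x + c·(cos θ, sin θ)} ∪ B(g, d). Then M_TC ⊆ M_IC ⊆ M_BC ⊆ M_B. -/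
open Real Metric Set
open scoped RealInnerProductSpace

noncomputable section

/-!
In the orthonormal frame `(uvec θ, nvec θ)` the projection `x + c • uvec θ` lies at distance
exactly `d` from `g`, so the triangle `x, g, x + c • uvec θ` and the ball `B(g, d)` both sit in
the convex hull of `{x} ∪ B(g, d)`. That hull is contained in the convex set
`B(g, ‖g - x‖) ∩ Cone(x, g, d)`, since both `x` and `B(g, d)` lie in it (the latter as
`d ≤ ‖g - x‖`).
-/

lemma norm_nvec (θ : ℝ) : ‖nvec θ‖ = 1 := by
  simp [EuclideanSpace.norm_eq, nvec, Fin.sum_univ_two, Real.sin_sq_add_cos_sq]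

lemma inner_uvec_smul_add_inner_nvec_smul (θ : ℝ) (v : E2) :
    ⟪uvec θ, v⟫ • uvec θ + ⟪nvec θ, v⟫ • nvec θ = v := by
  ext i
  fin_cases i
  · simp [uvec, nvec, PiLp.inner_apply, Fin.sum_univ_two]
    linear_combination v 0 * Real.sin_sq_add_cos_sq θ
  · simp [uvec, nvec, PiLp.inner_apply, Fin.sum_univ_two]
    linear_combination v 1 * Real.sin_sq_add_cos_sq θ

lemma dist_add_inner_uvec_smul (x g : E2) (θ : ℝ) :
    dist (x + ⟪uvec θ, g - x⟫ • uvec θ) g = |⟪nvec θ, g - x⟫| := by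
  have h : g - x - ⟪uvec θ, g - x⟫ • uvec θ = ⟪nvec θ, g - x⟫ • nvec θ :=
    sub_eq_of_eq_add' (inner_uvec_smul_add_inner_nvec_smul θ (g - x)).symm
  rw [dist_eq_norm', ← sub_sub, h, norm_smul, norm_nvec, mul_one, Real.norm_eq_abs]

lemma convex_cone (a b : E2) (r : ℝ) : Convex ℝ (cone a b r) := by
  rintro p ⟨α, hα, z, hz, rfl⟩ q ⟨β, hβ, w, hw, rfl⟩ t s ht hs hts
  have htα := mul_nonneg ht hα
  have hsβ := mul_nonneg hs hβ
  rcases (add_nonneg htα hsβ).eq_or_lt with h | hpos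
  · refine ⟨0, le_rfl, z, hz, ?_⟩
    have h1 : t * α = 0 := by linarith
    have h2 : s * β = 0 := by linarith
    match_scalars <;> linarith
  · refine ⟨t * α + s * β, hpos.le,
      (t * α / (t * α + s * β)) • z + (s * β / (t * α + s * β)) • w, ?_, ?_⟩
    · exact convex_closedBall b r hz hw (div_nonneg htα hpos.le) (div_nonneg hsβ hpos.le)
        (by field_simp)
    · match_scalars <;> field_simp
      linear_combination hts

lemma closedBall_subset_cone (a b : E2) (r : ℝ) : closedBall b r ⊆ cone a b r :=
  fun p hp => ⟨1, zero_le_one, p, hp, by simp⟩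

lemma icone_subset_closedBall_inter_cone {a b : E2} {r : ℝ} (hr : 0 ≤ r)
    (hrle : r ≤ ‖b - a‖) : icone a b r ⊆ closedBall b ‖b - a‖ ∩ cone a b r := by
  refine convexHull_min (union_subset ?_ ?_) ((convex_closedBall _ _).inter (convex_cone a b r))
  · rintro _ rfl
    exact ⟨by simp [dist_eq_norm'], 0, le_rfl, b, mem_closedBall_self hr, by simp⟩
  · exact subset_inter (closedBall_subset_closedBall hrle) (closedBall_subset_cone a b r)

lemma convexHull_triangle_union_closedBall_subset_icone {a b p : E2} {r : ℝ} (hr : 0 ≤ r)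
    (hp : p ∈ closedBall b r) : convexHull ℝ {a, b, p} ∪ closedBall b r ⊆ icone a b r := by
  refine union_subset (convexHull_mono ?_) (subset_union_right.trans (subset_convexHull ℝ _))
  rintro q (rfl | rfl | rfl)
  exacts [Or.inl rfl, Or.inr (mem_closedBall_self hr), Or.inr hp]

theorem stmt_11_general (x g : E2) (θ : ℝ)
    (c : ℝ) (hc : c = ⟪uvec θ, g - x⟫)
    (d : ℝ) (hd : d = |⟪nvec θ, g - x⟫|)
    (MB MBC MIC MTC : Set E2)
    (hMB : MB = closedBall g ‖g - x‖)
    (hMBC : MBC = closedBall g ‖g - x‖ ∩ cone x g d)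
    (hMIC : MIC = icone x g d)
    (hMTC : MTC = convexHull ℝ {x, g, x + c • uvec θ} ∪ closedBall g d) :
    MTC ⊆ MIC ∧ MIC ⊆ MBC ∧ MBC ⊆ MB := by
  subst hc hd hMB hMBC hMIC hMTC
  have hd0 : 0 ≤ |⟪nvec θ, g - x⟫| := abs_nonneg _
  have hdle : |⟪nvec θ, g - x⟫| ≤ ‖g - x‖ := by
    simpa [norm_nvec] using abs_real_inner_le_norm (nvec θ) (g - x)
  have hproj : x + ⟪uvec θ, g - x⟫ • uvec θ ∈ closedBall g |⟪nvec θ, g - x⟫| :=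
    (dist_add_inner_uvec_smul x g θ).le
  exact ⟨convexHull_triangle_union_closedBall_subset_icone hd0 hproj,
    icone_subset_closedBall_inter_cone hd0 hdle, inter_subset_left⟩

/-- Inclusion relation between the truncated ice-cream cone, the ice-cream
cone, the bounded cone, and the Lyapunov ball motion predictions. -/
theorem stmt_11 (x g : E2) (θ : ℝ)
    (c : ℝ) (hc : c = ⟪uvec θ, g - x⟫) (hc0 : 0 ≤ c)
    (d : ℝ) (hd : d = |⟪nvec θ, g - x⟫|)
    (MB MBC MIC MTC : Set E2)
    (hMB : MB = closedBall g ‖g - x‖)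
    (hMBC : MBC = closedBall g ‖g - x‖ ∩ cone x g d)
    (hMIC : MIC = icone x g d)
    (hMTC : MTC = convexHull ℝ {x, g, x + c • uvec θ} ∪ closedBall g d) :
    MTC ⊆ MIC ∧ MIC ⊆ MBC ∧ MBC ⊆ MB :=
  stmt_11_general x g θ c hc d hd MB MBC MIC MTC hMB hMBC hMIC hMTC
end
end

section
/- Removing the inscribed ball B(b, r) from the unbounded cone Cone(a, b, r) with 0 < r < ‖b − a‖ disconnects it: Cone(a, b, r) \ B(b, r) is the disjoint union of a bounded component containing the apex a and an unbounded component, and any continuous path in Cone(a, b, r) from a point in the bounded component to a point in the unbounded component must intersect B(b, r). -/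
/-!
Put `φ z = ⟪b - a, z - a⟫` and `s = ‖b - a‖² - r² > 0`. Every point of the cone satisfies
`s ‖z - a‖² ≤ (φ z)²` and `0 ≤ φ z` (the half-angle `θ` of the cone has `cos² θ = s / ‖b - a‖²`).
On the hyperplane `φ = s`, which contains the circle along which the cone touches the ball, this
gives `‖z - a‖² ≤ s` and then `‖z - b‖ ≤ r`: the hyperplane meets the cone only inside the ball.
So the cone minus the ball splits into the part with `φ < s`, which lies within `‖b - a‖` of the
apex, and the part with `φ > s`, which contains the ray from `a` through `b` beyond `2 b - a`;
a path in the cone from one part to the other crosses `φ = s` by the intermediate value theorem.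
-/
open Real Metric Set
open scoped RealInnerProductSpace

noncomputable section

section InnerProductSpace

variable {F : Type*} [NormedAddCommGroup F] [InnerProductSpace ℝ F] {a b w z : F} {r : ℝ}

/-- With `d = b - a` and `u = w - b`, the right side minus the left side is
`(⟪d, u⟫ + r²)² + (r² - ‖u‖²)(‖d‖² - r²)`. -/
theorem sub_sq_mul_norm_sq_le_inner_sq (hw : w ∈ closedBall b r) :
    (‖b - a‖ ^ 2 - r ^ 2) * ‖w - a‖ ^ 2 ≤ ⟪b - a, w - a⟫ ^ 2 := by
  rcases le_or_gt (‖b - a‖ ^ 2) (r ^ 2) with hbr | hbr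
  · exact (mul_nonpos_of_nonpos_of_nonneg (by linarith) (by positivity)).trans (sq_nonneg _)
  have hwb : ‖w - b‖ ^ 2 ≤ r ^ 2 := by
    rw [mem_closedBall, dist_eq_norm] at hw
    exact pow_le_pow_left₀ (norm_nonneg _) hw 2
  have hwa : w - a = (w - b) + (b - a) := by abel
  have hnorm : ‖w - a‖ ^ 2 = ‖w - b‖ ^ 2 + 2 * ⟪b - a, w - b⟫ + ‖b - a‖ ^ 2 := by
    rw [hwa, norm_add_sq_real, real_inner_comm]
  have hinner : ⟪b - a, w - a⟫ = ⟪b - a, w - b⟫ + ‖b - a‖ ^ 2 := by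
    rw [hwa, inner_add_right, real_inner_self_eq_norm_sq]
  rw [hnorm, hinner]
  nlinarith [sq_nonneg (⟪b - a, w - b⟫ + r ^ 2),
    mul_nonneg (sub_nonneg.2 hwb) (sub_nonneg.2 hbr.le)]

theorem inner_sub_nonneg_of_mem_closedBall (hr : r ≤ ‖b - a‖) (hw : w ∈ closedBall b r) :
    0 ≤ ⟪b - a, w - a⟫ := by
  rw [mem_closedBall, dist_eq_norm] at hw
  have hwa : w - a = (w - b) + (b - a) := by abel
  rw [hwa, inner_add_right, real_inner_self_eq_norm_sq, sq]
  have := (neg_abs_le _).trans' (neg_le_neg (abs_real_inner_le_norm (b - a) (w - b)))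
  nlinarith [mul_le_mul_of_nonneg_left (hw.trans hr) (norm_nonneg (b - a))]

theorem mem_closedBall_of_inner_sub_eq (hr : 0 ≤ r) (hs : 0 < ‖b - a‖ ^ 2 - r ^ 2)
    (hz : (‖b - a‖ ^ 2 - r ^ 2) * ‖z - a‖ ^ 2 ≤ ⟪b - a, z - a⟫ ^ 2)
    (heq : ⟪b - a, z - a⟫ = ‖b - a‖ ^ 2 - r ^ 2) : z ∈ closedBall b r := by
  have hza : ‖z - a‖ ^ 2 ≤ ‖b - a‖ ^ 2 - r ^ 2 :=
    le_of_mul_le_mul_left (hz.trans_eq (by rw [heq, sq])) hs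
  have hzb : ‖z - b‖ ^ 2 = ‖z - a‖ ^ 2 - 2 * ⟪b - a, z - a⟫ + ‖b - a‖ ^ 2 := by
    rw [show z - b = (z - a) - (b - a) by abel, norm_sub_sq_real, real_inner_comm]
  rw [mem_closedBall, dist_eq_norm]
  exact (pow_le_pow_iff_left₀ (norm_nonneg _) hr two_ne_zero).1 (by rw [hzb, heq]; linarith)

end InnerProductSpace

theorem not_isBounded_of_forall_lineMap_mem {V P : Type*} [NormedAddCommGroup V]
    [NormedSpace ℝ V] [MetricSpace P] [NormedAddTorsor V P] {p q : P} (hpq : p ≠ q)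
    {s : Set P} (c : ℝ) (h : ∀ α ≥ c, AffineMap.lineMap p q α ∈ s) : ¬ Bornology.IsBounded s :=
  fun hs ↦ not_bddAbove_Ici c <|
    ((antilipschitzWith_lineMap hpq).isBounded_preimage hs).bddAbove.mono fun α hα ↦ h α hα

section Cone

variable {a b z : E2} {r : ℝ}

theorem sub_sq_mul_norm_sq_le_inner_sq_of_mem_cone (hz : z ∈ cone a b r) :
    (‖b - a‖ ^ 2 - r ^ 2) * ‖z - a‖ ^ 2 ≤ ⟪b - a, z - a⟫ ^ 2 := by
  obtain ⟨α, hα, w, hw, rfl⟩ := hz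
  rw [add_sub_cancel_left, inner_smul_right, norm_smul, Real.norm_eq_abs, mul_pow, mul_pow,
    sq_abs, mul_left_comm]
  exact mul_le_mul_of_nonneg_left (sub_sq_mul_norm_sq_le_inner_sq hw) (sq_nonneg α)

theorem inner_sub_nonneg_of_mem_cone (hr : r ≤ ‖b - a‖) (hz : z ∈ cone a b r) :
    0 ≤ ⟪b - a, z - a⟫ := by
  obtain ⟨α, hα, w, hw, rfl⟩ := hz
  rw [add_sub_cancel_left, inner_smul_right]
  exact mul_nonneg hα (inner_sub_nonneg_of_mem_closedBall hr hw)

def coneNear (a b : E2) (r : ℝ) : Set E2 :=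
  (cone a b r \ closedBall b r) ∩ {z | ⟪b - a, z - a⟫ < ‖b - a‖ ^ 2 - r ^ 2}

def coneFar (a b : E2) (r : ℝ) : Set E2 :=
  (cone a b r \ closedBall b r) ∩ {z | ‖b - a‖ ^ 2 - r ^ 2 < ⟪b - a, z - a⟫}

theorem cone_diff_closedBall_eq_coneNear_union_coneFar (h0 : 0 ≤ r) (h1 : r < ‖b - a‖) :
    cone a b r \ closedBall b r = coneNear a b r ∪ coneFar a b r := by
  have hs : 0 < ‖b - a‖ ^ 2 - r ^ 2 := by nlinarith
  ext z
  refine ⟨fun hz ↦ ?_, by rintro (⟨hz, -⟩ | ⟨hz, -⟩) <;> exact hz⟩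
  rcases lt_trichotomy ⟪b - a, z - a⟫ (‖b - a‖ ^ 2 - r ^ 2) with hlt | heq | hgt
  · exact Or.inl ⟨hz, hlt⟩
  · exact (hz.2 (mem_closedBall_of_inner_sub_eq h0 hs
      (sub_sq_mul_norm_sq_le_inner_sq_of_mem_cone hz.1) heq)).elim
  · exact Or.inr ⟨hz, hgt⟩

theorem disjoint_coneNear_coneFar : Disjoint (coneNear a b r) (coneFar a b r) :=
  Set.disjoint_left.2 fun _ hnear hfar ↦ lt_asymm (α := ℝ) hnear.2 hfar.2

theorem apex_mem_coneNear (h0 : 0 < r) (h1 : r < ‖b - a‖) : a ∈ coneNear a b r := by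
  refine ⟨⟨⟨0, le_rfl, b, mem_closedBall_self h0.le, by simp⟩, ?_⟩, ?_⟩
  · rwa [mem_closedBall, dist_comm, dist_eq_norm, not_le]
  · change ⟪b - a, a - a⟫ < _
    rw [sub_self, inner_zero_right]
    nlinarith

theorem coneNear_subset_ball (h1 : r ≤ ‖b - a‖) : coneNear a b r ⊆ ball a ‖b - a‖ := by
  rintro z ⟨⟨hz, -⟩, hlt : ⟪b - a, z - a⟫ < ‖b - a‖ ^ 2 - r ^ 2⟩
  have hcone := sub_sq_mul_norm_sq_le_inner_sq_of_mem_cone hz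
  have hnn := inner_sub_nonneg_of_mem_cone h1 hz
  have hza : ‖z - a‖ ^ 2 < ‖b - a‖ ^ 2 - r ^ 2 :=
    lt_of_mul_lt_mul_left (hcone.trans_lt (by nlinarith)) (hnn.trans hlt.le)
  rw [mem_ball, dist_eq_norm]
  exact (pow_lt_pow_iff_left₀ (norm_nonneg _) (norm_nonneg _) two_ne_zero).1 (by nlinarith)

theorem not_isBounded_coneFar (h0 : 0 < r) (h1 : r < ‖b - a‖) :
    ¬ Bornology.IsBounded (coneFar a b r) := by
  have hd : 0 < ‖b - a‖ := h0.trans h1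
  refine not_isBounded_of_forall_lineMap_mem (p := a) (q := b) (fun hab ↦ ?_) 2 fun α hα ↦ ?_
  · simp [hab] at hd
  have hpa : AffineMap.lineMap a b α - a = α • (b - a) := by
    rw [AffineMap.lineMap_apply_module', add_sub_cancel_right]
  refine ⟨⟨⟨α, by linarith, b, mem_closedBall_self h0.le, ?_⟩, ?_⟩, ?_⟩
  · rw [← hpa, add_sub_cancel]
  · have hpb : AffineMap.lineMap a b α - b = (α - 1) • (b - a) := by
      rw [AffineMap.lineMap_apply_module']; module
    rw [mem_closedBall, dist_eq_norm, hpb, norm_smul, Real.norm_eq_abs,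
      abs_of_nonneg (by linarith), not_le]
    nlinarith
  · change _ < ⟪b - a, _⟫
    rw [hpa, inner_smul_right, real_inner_self_eq_norm_sq]
    nlinarith

theorem IsPreconnected.exists_mem_closedBall_of_mem_coneNear_of_mem_coneFar {X : Type*}
    [TopologicalSpace X] {s : Set X} (hs : IsPreconnected s) {f : X → E2} (hf : ContinuousOn f s)
    (hfs : MapsTo f s (cone a b r)) (h0 : 0 ≤ r) (h1 : r < ‖b - a‖) {x y : X} (hx : x ∈ s)
    (hy : y ∈ s) (hfx : f x ∈ coneNear a b r) (hfy : f y ∈ coneFar a b r) :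
    ∃ t ∈ s, f t ∈ closedBall b r := by
  have hφ : ContinuousOn (fun t ↦ ⟪b - a, f t - a⟫) s :=
    (continuous_const.inner (continuous_id.sub continuous_const)).comp_continuousOn hf
  obtain ⟨t, ht, heq⟩ := hs.intermediate_value hx hy hφ ⟨hfx.2.le, hfy.2.le⟩
  exact ⟨t, ht, mem_closedBall_of_inner_sub_eq h0 (by nlinarith)
    (sub_sq_mul_norm_sq_le_inner_sq_of_mem_cone (hfs ht)) heq⟩

end Cone

/-- Removing the inscribed ball from the cone disconnects it into a bounded
component containing the apex and an unbounded component, and any continuous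
path in the cone between the two components must meet the ball. -/
theorem stmt_12 (a b : E2) (r : ℝ) (h0 : 0 < r) (h1 : r < ‖b - a‖) :
    ∃ U V : Set E2,
      cone a b r \ closedBall b r = U ∪ V ∧ Disjoint U V ∧
      a ∈ U ∧ Bornology.IsBounded U ∧ ¬ Bornology.IsBounded V ∧
      ∀ f : ℝ → E2, ContinuousOn f (Set.Icc 0 1) →
        (∀ t ∈ Set.Icc (0 : ℝ) 1, f t ∈ cone a b r) →
        f 0 ∈ U → f 1 ∈ V → ∃ t ∈ Set.Icc (0 : ℝ) 1, f t ∈ closedBall b r := by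
  refine ⟨coneNear a b r, coneFar a b r,
    cone_diff_closedBall_eq_coneNear_union_coneFar h0.le h1, disjoint_coneNear_coneFar,
    apex_mem_coneNear h0 h1, isBounded_ball.subset (coneNear_subset_ball h1.le),
    not_isBounded_coneFar h0 h1, fun f hf hfc hf0 hf1 ↦
      isPreconnected_Icc.exists_mem_closedBall_of_mem_coneNear_of_mem_coneFar hf hfc h0.le h1
        (left_mem_Icc.2 zero_le_one) (right_mem_Icc.2 zero_le_one) hf0 hf1⟩
end
end

section
/- Along any solution of the closed-loop unicycle dynamics under the forward motion control with x(0) ≠ g and initial alignment (cos θ(0), sin θ(0))·(g − x(0)) ≤ 0, there exists a time t* ≤ 1/k_ω such that (cos θ(t*), sin θ(t*))·(g − x(t*)) > 0, given that whenever the alignment is nonpositive the linear velocity is zero and the angular speed satisfies |ω| ≥ k_ω·π/2 while the remaining geodesic angular error to alignment is at most π/2. -/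
open Real Metric Set
open scoped RealInnerProductSpace

noncomputable section

/-! While the unicycle is misaligned it does not move, so writing `g - x = r (cos φ, sin φ)`,
the heading error `γ = φ - θ` obeys `γ' = -k_ω ⟦γ⟧`, where `⟦γ⟧ ∈ (-π, π]` is its principal
value, and alignment means `cos γ > 0`. Shift `γ` by a multiple of `2π` so that
`γ(0) ∈ [π/2, π]` (the other sign is symmetric). As long as `cos γ ≤ 0` the error cannot leave
`[π/2, γ(0)]`, so there it equals `γ(0) e^{-k_ω t}`, which is below `π/2` at `t = 1/k_ω`
because `e > 2`. -/

lemma inner_uvec_uvec (a b : ℝ) : ⟪uvec a, uvec b⟫ = cos (b - a) := by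
  simp [uvec, PiLp.inner_apply, Fin.sum_univ_two, cos_sub]

lemma inner_nvec_uvec (a b : ℝ) : ⟪nvec a, uvec b⟫ = sin (b - a) := by
  simp only [nvec, uvec, PiLp.inner_apply, RCLike.inner_apply, ringHom_apply, Fin.sum_univ_two,
    Matrix.cons_val_zero, Matrix.cons_val_one, sin_sub]
  ring

lemma exists_eq_smul_uvec {p : E2} (hp : p ≠ 0) : ∃ r : ℝ, 0 < r ∧ ∃ φ, p = r • uvec φ := by
  set z : ℂ := ⟨p 0, p 1⟩
  have hz : z ≠ 0 := by
    intro h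
    apply hp
    ext i
    fin_cases i
    · exact congrArg Complex.re h
    · exact congrArg Complex.im h
  refine ⟨‖z‖, norm_pos_iff.2 hz, z.arg, ?_⟩
  ext i
  fin_cases i
  · simp [uvec, Complex.norm_mul_cos_arg, z]
  · simp [uvec, Complex.norm_mul_sin_arg, z]

lemma atan2_mul_sin_mul_cos {r : ℝ} (hr : 0 < r) (γ : ℝ) :
    atan2 (r * sin γ) (r * cos γ) = (γ : Real.Angle).toReal := by
  rw [atan2, Real.Angle.toReal_coe, ← Complex.arg_mul_cos_add_sin_mul_I_eq_toIocMod hr]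
  push_cast
  ring_nf

lemma pi_div_two_le_of_cos_nonpos {γ : ℝ → ℝ} {a b : ℝ} (hγ : ContinuousOn γ (Icc a b))
    (ha : π / 2 ≤ γ a) (hcos : ∀ s ∈ Icc a b, cos (γ s) ≤ 0) : ∀ s ∈ Icc a b, π / 2 ≤ γ s := by
  intro s hs
  by_contra! hlt
  -- otherwise `γ` would pass through `max (γ s) 0 ∈ [0, π/2)`, where the cosine is positive
  obtain ⟨u, hu, hγu⟩ := intermediate_value_Icc' hs.1 (hγ.mono (Icc_subset_Icc_right hs.2))
    ⟨le_max_left (γ s) 0, max_le (hlt.le.trans ha) (by linarith [pi_pos])⟩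
  have hcos_u := hcos u ⟨hu.1, hu.2.trans hs.2⟩
  rw [hγu] at hcos_u
  exact hcos_u.not_gt (cos_pos_of_mem_Ioo
    ⟨by linarith [pi_pos, le_max_right (γ s) 0], max_lt hlt (by positivity)⟩)

lemma exists_cos_pos_of_hasDerivAt_of_mem_Icc {k : ℝ} (hk : 0 < k) {γ γ' : ℝ → ℝ}
    (hγ : ∀ s ∈ Icc 0 (1 / k), HasDerivAt γ (γ' s) s) (h0 : γ 0 ∈ Icc (π / 2) π)
    (hγ' : ∀ s ∈ Icc 0 (1 / k), γ s ∈ Icc (π / 2) (γ 0) → γ' s = -(k * γ s)) :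
    ∃ s ∈ Icc 0 (1 / k), 0 < cos (γ s) := by
  by_contra! hcos
  have hT : (0 : ℝ) ≤ 1 / k := by positivity
  have hcont : ContinuousOn γ (Icc 0 (1 / k)) := fun s hs =>
    (hγ s hs).continuousAt.continuousWithinAt
  have hge := pi_div_two_le_of_cos_nonpos hcont h0.1 hcos
  have hle : ∀ s ∈ Icc 0 (1 / k), γ s ≤ γ 0 :=
    image_le_of_deriv_right_lt_deriv_boundary hcont
      (fun s hs => (hγ s (Ico_subset_Icc_self hs)).hasDerivWithinAt) le_rfl
      (fun _ => hasDerivAt_const _ _) fun s hs hs0 => by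
        have hs := Ico_subset_Icc_self hs
        rw [hγ' s hs ⟨hge s hs, hs0.le⟩]
        nlinarith [hge s hs, pi_pos]
  have hdecay : ∀ s ∈ Icc 0 (1 / k), γ s * exp (k * s) = γ 0 * exp (k * 0) := by
    refine constant_of_has_deriv_right_zero
      (fun s hs => (hcont s hs).mul (by fun_prop)) fun s hs => ?_
    have hs := Ico_subset_Icc_self hs
    have h : HasDerivAt (fun u => γ u * exp (k * u))
        (γ' s * exp (k * s) + γ s * (exp (k * s) * k)) s :=
      (hγ s hs).mul (by simpa using ((hasDerivAt_id s).const_mul k).exp)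
    rw [hγ' s hs ⟨hge s hs, hle s hs⟩, show -(k * γ s) * exp (k * s) + γ s * (exp (k * s) * k) = 0
      by ring] at h
    exact h.hasDerivWithinAt
  have hend := hdecay (1 / k) (right_mem_Icc.2 hT)
  rw [mul_one_div_cancel hk.ne', mul_zero, exp_zero, mul_one] at hend
  nlinarith [exp_one_gt_d9, hge (1 / k) (right_mem_Icc.2 hT), h0.2, pi_pos]

lemma exists_cos_pos_of_hasDerivAt_toReal_of_mem_Ioc {k : ℝ} (hk : 0 < k) {γ : ℝ → ℝ}
    (hγ : ∀ s ∈ Icc 0 (1 / k), HasDerivAt γ (-(k * (γ s : Real.Angle).toReal)) s)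
    (h0 : γ 0 ∈ Ioc (-π) π) : ∃ s ∈ Icc 0 (1 / k), 0 < cos (γ s) := by
  have hT : (0 : ℝ) ≤ 1 / k := by positivity
  have htoReal : ∀ s, γ s ∈ Ioc (-π) π → (γ s : Real.Angle).toReal = γ s := fun s hs =>
    Real.Angle.toReal_coe_eq_self_iff.2 hs
  by_cases hcos0 : 0 < cos (γ 0)
  · exact ⟨0, left_mem_Icc.2 hT, hcos0⟩
  rcases le_or_gt 0 (γ 0) with hnonneg | hneg
  · have hγ0 : π / 2 ≤ γ 0 := by
      by_contra! h
      exact hcos0 (cos_pos_of_mem_Ioo ⟨by linarith [pi_pos], h⟩)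
    refine exists_cos_pos_of_hasDerivAt_of_mem_Icc hk hγ ⟨hγ0, h0.2⟩ fun s _ hs => ?_
    rw [htoReal s ⟨by linarith [pi_pos, hs.1], hs.2.trans h0.2⟩]
  · have hγ0 : γ 0 ≤ -(π / 2) := by
      by_contra! h
      exact hcos0 (cos_pos_of_mem_Ioo ⟨h, by linarith [pi_pos]⟩)
    obtain ⟨s, hs, hpos⟩ := exists_cos_pos_of_hasDerivAt_of_mem_Icc hk
      (γ := fun s => -γ s) (fun s hs => (hγ s hs).neg) ⟨by linarith, by linarith [h0.1]⟩
      fun s _ hs => by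
        rw [htoReal s ⟨by linarith [h0.1, hs.2], by linarith [pi_pos, hs.1]⟩]
        ring
    exact ⟨s, hs, by simpa using hpos⟩

lemma exists_cos_pos_of_hasDerivAt_toReal {k : ℝ} (hk : 0 < k) {γ : ℝ → ℝ}
    (hγ : ∀ s ∈ Icc 0 (1 / k), HasDerivAt γ (-(k * (γ s : Real.Angle).toReal)) s) :
    ∃ s ∈ Icc 0 (1 / k), 0 < cos (γ s) := by
  set c := γ 0 - (γ 0 : Real.Angle).toReal
  have hcoe : ∀ s, ((γ s - c : ℝ) : Real.Angle) = γ s := fun s => by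
    simp [c, Real.Angle.coe_sub]
  obtain ⟨s, hs, hpos⟩ := exists_cos_pos_of_hasDerivAt_toReal_of_mem_Ioc hk
    (γ := fun s => γ s - c) (fun s hs => by simpa only [hcoe] using (hγ s hs).sub_const c)
    (by simpa [c] using Real.Angle.toReal_mem_Ioc _)
  refine ⟨s, hs, ?_⟩
  rwa [← Real.Angle.cos_coe, ← hcoe, Real.Angle.cos_coe]

theorem stmt_17_general (g : E2) (kv kω : ℝ) (hkω : 0 < kω)
    (x : ℝ → E2) (θ : ℝ → ℝ)
    (e : ℝ → ℝ) (he : e = fun s => ⟪uvec (θ s), g - x s⟫)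
    (v : ℝ → ℝ) (hv : v = fun s => kv * max 0 (e s))
    (ω : ℝ → ℝ) (hω : ω = fun s => kω * atan2 ⟪nvec (θ s), g - x s⟫ (e s))
    (hx : ∀ s, HasDerivAt x (v s • uvec (θ s)) s)
    (hθ : ∀ s, HasDerivAt θ (ω s) s)
    (hne : x 0 ≠ g) :
    ∃ tstar : ℝ, 0 ≤ tstar ∧ tstar ≤ 1 / kω ∧ 0 < e tstar := by
  by_contra! hcon
  have hstill : ∀ s ∈ Icc 0 (1 / kω), x s = x 0 :=
    constant_of_has_deriv_right_zero (fun s _ => (hx s).continuousAt.continuousWithinAt)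
      fun s hs => by
        have hvs : v s = 0 := by simp [hv, hcon s hs.1 hs.2.le]
        simpa [hvs] using (hx s).hasDerivWithinAt
  obtain ⟨r, hr, φ, hφ⟩ := exists_eq_smul_uvec (sub_ne_zero.2 hne.symm)
  have he_eq : ∀ s ∈ Icc 0 (1 / kω), e s = r * cos (φ - θ s) := fun s hs => by
    simp only [he]
    rw [hstill s hs, hφ]
    simp [inner_smul_right, inner_uvec_uvec]
  have hω_eq : ∀ s ∈ Icc 0 (1 / kω), ω s = kω * ((φ - θ s : ℝ) : Real.Angle).toReal :=
    fun s hs => by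
      simp only [hω]
      rw [he_eq s hs, hstill s hs, hφ]
      simp only [inner_smul_right, inner_nvec_uvec, atan2_mul_sin_mul_cos hr]
  obtain ⟨s, hs, hpos⟩ := exists_cos_pos_of_hasDerivAt_toReal hkω (γ := fun s => φ - θ s)
    fun s hs => by simpa [hω_eq s hs] using (hθ s).const_sub φ
  exact (hcon s hs.1 hs.2).not_gt (by rw [he_eq s hs]; positivity)

/-- Finite-time goal alignment: a misaligned unicycle becomes aligned with the
goal within `1/k_ω` seconds under the forward motion control. -/
theorem stmt_17 (g : E2) (kv kω : ℝ) (hkv : 0 < kv) (hkω : 0 < kω)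
    (x : ℝ → E2) (θ : ℝ → ℝ)
    (e : ℝ → ℝ) (he : e = fun s => ⟪uvec (θ s), g - x s⟫)
    (v : ℝ → ℝ) (hv : v = fun s => kv * max 0 (e s))
    (ω : ℝ → ℝ) (hω : ω = fun s => kω * atan2 ⟪nvec (θ s), g - x s⟫ (e s))
    (hx : ∀ s, HasDerivAt x (v s • uvec (θ s)) s)
    (hθ : ∀ s, HasDerivAt θ (ω s) s)
    (hne : x 0 ≠ g) (hmis : e 0 ≤ 0) :
    ∃ tstar : ℝ, 0 ≤ tstar ∧ tstar ≤ 1 / kω ∧ 0 < e tstar :=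
  stmt_17_general g kv kω hkω x θ e he v hv ω hω hx hθ hne
end
end
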